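/- K₀ is a Fraïssé class; consequently there exists a countably infinite ultrahomogeneous L₀-structure M₀ whose age (the class of finite structures embeddable into M₀) is exactly K₀. (Ultrahomogeneous means every isomorphism between finite substructures extends to an automorphism.) -/

import Mathlib

open FirstOrder Language Structure CategoryTheory

/-- The language `L₀` with a `2n`-ary relation symbol `E_n` for each `n ≥ 1`. -/
def L₀ : FirstOrder.Language where
  Functions := fun _ => Empty
  Relations := fun k => {n : ℕ // 0 < n ∧ k = n + n}

/-- The relation symbol `E_n`. -/
def Esymb (n : ℕ) (hn : 0 < n) : L₀.Relations (n + n) := ⟨n, hn, rfl⟩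

/-- `E_n(x̄, ȳ)` in an `L₀`-structure. -/
def ERel (M : Type*) [L₀.Structure M] (n : ℕ) (hn : 0 < n) (x y : Fin n → M) : Prop :=
  Structure.RelMap (Esymb n hn) (Fin.append x y)

/-- The defining conditions for membership in `K₀`: each `E_n` holds only on pairs of
injective `n`-tuples, is invariant under permuting the entries of each tuple separately,
and induces an equivalence relation on `n`-element subsets. -/
def IsK0Struct (C : Type*) [L₀.Structure C] : Prop :=
  ∀ (n : ℕ) (hn : 0 < n),
    (∀ x y : Fin n → C, ERel C n hn x y → Function.Injective x ∧ Function.Injective y) ∧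
    (∀ (x y : Fin n → C) (σ τ : Equiv.Perm (Fin n)),
        ERel C n hn x y → ERel C n hn (x ∘ σ) (y ∘ τ)) ∧
    (∀ x : Fin n → C, Function.Injective x → ERel C n hn x x) ∧
    (∀ x y : Fin n → C, ERel C n hn x y → ERel C n hn y x) ∧
    (∀ x y z : Fin n → C, ERel C n hn x y → ERel C n hn y z → ERel C n hn x z)

/-- The class `K₀` of finite `L₀`-structures as above. -/
def K₀ : Set (Bundled L₀.Structure) := {C | Finite C ∧ IsK0Struct C}

/-!
The limit is built explicitly on `ℕ`. Each number `b` is read as a code for a finite table which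
prescribes, for finitely many sets `S` of smaller numbers, whether `insert b S` joins the class of a
given set of smaller numbers or opens a new class with a given label. Unwinding these instructions
gives every finite set a class tag, and `E_n` holds between injective `n`-tuples exactly when their
underlying sets have the same tag, so the axioms of `K₀` hold.

Since every finite table is coded by arbitrarily large numbers, a partial embedding of a structure
`A ∈ K₀` into the generic structure extends to one more point `a`: choose `b` larger than the
image and coding the table that sends each set through `a` to the class it has in `A`. Thus every
`K₀`-structure forms an extension pair with the generic structure. Back and forth then embeds
every finite `K₀`-structure into it and makes it ultrahomogeneous, and the age of a countable
ultrahomogeneous structure is a Fraïssé class.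
-/

universe u

theorem Finset.max'_insert_of_forall_lt {α : Type*} [LinearOrder α] {b : α} {S : Finset α}
    (hS : ∀ x ∈ S, x < b) :
    (insert b S).max' (Finset.insert_nonempty b S) = b :=
  le_antisymm (Finset.max'_le _ _ _ fun x hx => (Finset.mem_insert.1 hx).elim le_of_eq
    fun hx => (hS x hx).le) (Finset.le_max' _ _ (Finset.mem_insert_self b S))

theorem Finset.image_update_of_notMem {α β : Type*} [DecidableEq α] [DecidableEq β]
    {f : α → β} {a : α} {b : β} {U : Finset α} (ha : a ∉ U) :
    U.image (Function.update f a b) = U.image f :=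
  Finset.image_congr fun _ hx => Function.update_of_ne (ne_of_mem_of_not_mem hx ha) _ _

theorem Finset.image_update_of_mem {α β : Type*} [DecidableEq α] [DecidableEq β]
    {f : α → β} {a : α} {b : β} {U : Finset α} (ha : a ∈ U) :
    U.image (Function.update f a b) = insert b ((U.erase a).image f) := by
  conv_lhs => rw [← Finset.insert_erase ha]
  rw [Finset.image_insert, Function.update_self,
    Finset.image_update_of_notMem (Finset.notMem_erase a U)]

theorem Set.InjOn.update_insert {α β : Type*} [DecidableEq α] {f : α → β} {s : Set α}
    (hf : Set.InjOn f s) {a : α} (ha : a ∉ s) {b : β} (hb : b ∉ f '' s) :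
    Set.InjOn (Function.update f a b) (insert a s) := by
  have heq : Set.EqOn f (Function.update f a b) s := fun _ hx =>
    (Function.update_of_ne (ne_of_mem_of_not_mem hx ha) _ _).symm
  rw [Set.injOn_insert ha, Function.update_self, ← heq.image_eq]
  exact ⟨hf.congr heq, hb⟩

theorem Set.InjOn.filter_mem_image_eq {α β : Type*} [DecidableEq β] {f : α → β}
    {s W : Finset α} (hf : Set.InjOn f s) (hW : W ⊆ s) :
    s.filter (fun x => f x ∈ W.image f) = W := by
  ext x
  simp only [Finset.mem_filter, Finset.mem_image]
  exact ⟨fun ⟨hx, y, hy, hxy⟩ => hf (hW hy) hx hxy ▸ hy,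
    fun hx => ⟨hW hx, x, hx, rfl⟩⟩

theorem Finset.exists_injective_range_eq {α : Type*} (U : Finset α) {n : ℕ} (hU : U.card = n) :
    ∃ x : Fin n → α, Function.Injective x ∧ Set.range x = U := by
  subst hU
  refine ⟨fun i => U.equivFin.symm i, Subtype.val_injective.comp U.equivFin.symm.injective, ?_⟩
  ext z
  exact ⟨fun ⟨i, hi⟩ => hi ▸ (U.equivFin.symm i).2,
    fun hz => ⟨U.equivFin ⟨z, hz⟩, by simp⟩⟩

theorem Finset.card_eq_of_range_eq {α : Type*} {n : ℕ} {x : Fin n → α}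
    (hx : Function.Injective x) {U : Finset α} (hU : Set.range x = U) : U.card = n :=
  Finset.card_eq_of_equiv_fin ((Equiv.ofInjective x hx).trans (Equiv.setCongr hU)).symm

theorem Function.Injective.exists_perm_comp_eq {α : Type*} {n : ℕ} {x x' : Fin n → α}
    (hx : Function.Injective x) (hx' : Function.Injective x') (h : Set.range x = Set.range x') :
    ∃ σ : Equiv.Perm (Fin n), x' ∘ σ = x := by
  refine ⟨(Equiv.ofInjective x hx).trans
    ((Equiv.setCongr h).trans (Equiv.ofInjective x' hx').symm), funext fun i => ?_⟩
  simp [Equiv.apply_ofInjective_symm]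

theorem Finset.image_univ_comp_perm {α : Type*} [DecidableEq α] {n : ℕ} (x : Fin n → α)
    (σ : Equiv.Perm (Fin n)) : Finset.univ.image (x ∘ σ) = Finset.univ.image x := by
  rw [← Finset.image_image, Finset.image_univ_equiv]

theorem Fin.comp_append {α β : Type*} {m n : ℕ} (f : α → β) (x : Fin m → α)
    (y : Fin n → α) : f ∘ Fin.append x y = Fin.append (f ∘ x) (f ∘ y) := by
  funext i
  refine Fin.addCases (fun j => ?_) (fun j => ?_) i <;> simp

theorem iff_of_old_or_fresh {β γ : Type*} {R : β → β → Prop}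
    (hsymm : ∀ ⦃u v⦄, R u v → R v u) (htrans : ∀ ⦃u v w⦄, R u v → R v w → R u w)
    {τ : β → γ} {P O : β → Prop} (hO : ∀ u v, O u → O v → (R u v ↔ τ u = τ v))
    (hP : ∀ u, P u →
      (∃ v, O v ∧ R u v ∧ τ u = τ v) ∨ ∀ v, O v → ¬ R u v ∧ τ u ≠ τ v)
    (hfresh : ∀ u v, P u → P v → (∀ w, O w → ¬ R u w) → (∀ w, O w → ¬ R v w) →
      (R u v ↔ τ u = τ v))
    {u v : β} (hu : P u) (hv : P v) : R u v ↔ τ u = τ v := by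
  rcases hP u hu with ⟨u₀, hu₀, huu₀, hτu⟩ | hu'
  · rcases hP v hv with ⟨v₀, hv₀, hvv₀, hτv⟩ | hv'
    · rw [hτu, hτv, ← hO u₀ v₀ hu₀ hv₀]
      exact ⟨fun h => htrans (hsymm huu₀) (htrans h hvv₀),
        fun h => htrans huu₀ (htrans h (hsymm hvv₀))⟩
    · exact iff_of_false (fun h => (hv' u₀ hu₀).1 (htrans (hsymm h) huu₀))
        fun h => (hv' u₀ hu₀).2 (h.symm.trans hτu)
  · rcases hP v hv with ⟨v₀, hv₀, hvv₀, hτv⟩ | hv'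
    · exact iff_of_false (fun h => (hu' v₀ hv₀).1 (htrans h hvv₀))
        fun h => (hu' v₀ hv₀).2 (h.trans hτv)
    · exact hfresh u v hu hv (fun w hw => (hu' w hw).1) fun w hw => (hv' w hw).1

namespace K0Fraisse

abbrev CodeGraph : Type := Finset (Finset ℕ × (Finset ℕ ⊕ ℕ))

noncomputable def codeGraph (b : ℕ) : CodeGraph :=
  (Encodable.decode b.unpair.2 : Option CodeGraph).getD ∅

/-- The entry for `S` in the table coded by `b`: `.inl T'` puts `insert b S` into the class of
`T'`, `.inr l` makes it open the new class labelled `l`. -/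
noncomputable def instruction (b : ℕ) (S : Finset ℕ) : Finset ℕ ⊕ ℕ :=
  open Classical in if h : ∃ t, (S, t) ∈ codeGraph b then h.choose else .inr 0

theorem exists_instruction_eq (k : ℕ) (D : Finset (Finset ℕ))
    (φ : Finset ℕ → Finset ℕ ⊕ ℕ) : ∃ b, k ≤ b ∧ ∀ S ∈ D, instruction b S = φ S := by
  classical
  let graph : CodeGraph := D.image fun S => (S, φ S)
  refine ⟨Nat.pair k (Encodable.encode graph), Nat.left_le_pair _ _, fun S hS => ?_⟩
  have hgraph : ∀ t, (S, t) ∈ codeGraph (Nat.pair k (Encodable.encode graph)) ↔ t = φ S := by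
    simp [codeGraph, Encodable.encodek, graph, eq_comm, hS]
  have hex : ∃ t, (S, t) ∈ codeGraph (Nat.pair k (Encodable.encode graph)) :=
    ⟨φ S, (hgraph _).2 rfl⟩
  rw [instruction, dif_pos hex]
  exact (hgraph _).1 hex.choose_spec

/-- `.inl (b, l)` is the class labelled `l` opened at `b`; `.inr T` is the singleton class of `T`,
the fallback when the instruction at `max T` points to a set that is not below `max T`. -/
noncomputable def classTag (T : Finset ℕ) : (ℕ × ℕ) ⊕ Finset ℕ :=
  if hT : T.Nonempty then
    match instruction (T.max' hT) (T.erase (T.max' hT)) with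
    | .inl T' => if ∀ x ∈ T', x < T.max' hT then classTag T' else .inr T
    | .inr l => .inl (T.max' hT, l)
  else .inr T
termination_by T.sup (· + 1)
decreasing_by
  exact lt_of_le_of_lt (Finset.sup_le fun x hx => ‹∀ x ∈ T', x < T.max' hT› x hx)
    (Finset.le_sup (f := (· + 1)) (T.max'_mem hT))

theorem classTag_insert {b : ℕ} {S : Finset ℕ} (hS : ∀ x ∈ S, x < b) :
    classTag (insert b S) = match instruction b S with
      | .inl T' => if ∀ x ∈ T', x < b then classTag T' else .inr (insert b S)
      | .inr l => .inl (b, l) := by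
  have herase : (insert b S).erase b = S :=
    Finset.erase_insert fun hb => lt_irrefl b (hS b hb)
  rw [classTag, dif_pos (Finset.insert_nonempty b S)]
  simp only [Finset.max'_insert_of_forall_lt hS, herase]

theorem classTag_insert_of_inl {b : ℕ} {S T' : Finset ℕ} (hS : ∀ x ∈ S, x < b)
    (hT' : ∀ x ∈ T', x < b) (h : instruction b S = .inl T') :
    classTag (insert b S) = classTag T' := by
  rw [classTag_insert hS, h]
  exact if_pos hT'

theorem classTag_insert_of_inr {b l : ℕ} {S : Finset ℕ} (hS : ∀ x ∈ S, x < b)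
    (h : instruction b S = .inr l) : classTag (insert b S) = .inl (b, l) := by
  rw [classTag_insert hS, h]

theorem classTag_ne_inl_of_lt {b : ℕ} (l : ℕ) {T : Finset ℕ} (hT : ∀ x ∈ T, x < b) :
    classTag T ≠ .inl (b, l) := by
  induction T using classTag.induct with
  | case1 T hne T' hinst hT' ih =>
    rw [classTag, dif_pos hne]
    simp only [hinst, if_pos hT']
    exact ih fun x hx => (hT' x hx).trans (hT _ (T.max'_mem hne))
  | case2 T hne T' hinst hT' =>
    rw [classTag, dif_pos hne]
    simp [hinst, if_neg hT']
  | case3 T hne l' hinst =>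
    rw [classTag, dif_pos hne]
    simp only [hinst, ne_eq, Sum.inl.injEq, Prod.mk.injEq, not_and]
    exact fun h => absurd (hT _ (T.max'_mem hne)) (h ▸ lt_irrefl _)
  | case4 T hne =>
    rw [classTag, dif_neg hne]
    simp

section TagEmbedding

variable {α : Type*} [DecidableEq α] {R : Finset α → Finset α → Prop}

def IsTagEmbedding (R : Finset α → Finset α → Prop) (s : Finset α) (G : α → ℕ) : Prop :=
  Set.InjOn G s ∧ ∀ U ⊆ s, ∀ V ⊆ s, U.Nonempty → U.card = V.card →
    (R U V ↔ classTag (U.image G) = classTag (V.image G))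

theorem isTagEmbedding_insert (hsymm : ∀ ⦃U V⦄, R U V → R V U)
    (htrans : ∀ ⦃U V W⦄, R U V → R V W → R U W)
    (hrefl : ∀ U : Finset α, U.Nonempty → R U U)
    {s : Finset α} {G : α → ℕ} (hG : IsTagEmbedding R s G) {a : α} {G' : α → ℕ}
    (hG' : ∀ x ∈ s, G' x = G x) (hinj : Set.InjOn G' ↑(insert a s))
    (hold : ∀ U ⊆ insert a s, U.Nonempty → ∀ V ⊆ s, V.card = U.card → R U V →
      classTag (U.image G') = classTag (V.image G))
    (hnew : ∀ U ⊆ insert a s, a ∈ U → (∀ W ⊆ s, W.card = U.card → ¬ R U W) →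
      ∀ V ⊆ s, classTag (U.image G') ≠ classTag (V.image G))
    (hnew_iff : ∀ U ⊆ insert a s, ∀ V ⊆ insert a s, a ∈ U → a ∈ V → U.card = V.card →
      (∀ W ⊆ s, W.card = U.card → ¬ R U W) → (∀ W ⊆ s, W.card = V.card → ¬ R V W) →
        (R U V ↔ classTag (U.image G') = classTag (V.image G'))) :
    IsTagEmbedding R (insert a s) G' := by
  have image_eq : ∀ V ⊆ s, V.image G' = V.image G := fun V hV =>
    Finset.image_congr fun x hx => hG' x (hV hx)
  have mem_of_fresh : ∀ U ⊆ insert a s, U.Nonempty →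
      (∀ W ⊆ s, W.card = U.card → ¬ R U W) → a ∈ U := fun U hU hUne hfresh => by_contra fun haU =>
    hfresh U ((Finset.subset_insert_iff_of_notMem haU).1 hU) rfl (hrefl U hUne)
  refine ⟨hinj, fun U hU V hV hUne hcard => ?_⟩
  have nonempty_of_card : ∀ U' : Finset α, U'.card = U.card → U'.Nonempty := fun U' hc =>
    Finset.card_pos.1 (hc ▸ hUne.card_pos)
  refine iff_of_old_or_fresh hsymm htrans (τ := fun U => classTag (U.image G'))
    (P := fun U' => U' ⊆ insert a s ∧ U'.card = U.card)
    (O := fun V' => V' ⊆ s ∧ V'.card = U.card) ?_ ?_ ?_ ⟨hU, rfl⟩ ⟨hV, hcard.symm⟩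
  · rintro U₀ V₀ ⟨hU₀, hcU⟩ ⟨hV₀, hcV⟩
    simp only [image_eq U₀ hU₀, image_eq V₀ hV₀]
    exact hG.2 U₀ hU₀ V₀ hV₀ (nonempty_of_card U₀ hcU) (hcU.trans hcV.symm)
  · rintro U₀ ⟨hU₀, hcU⟩
    by_cases hex : ∃ V ⊆ s, V.card = U.card ∧ R U₀ V
    · obtain ⟨V, hVs, hcV, hR⟩ := hex
      refine .inl ⟨V, ⟨hVs, hcV⟩, hR, ?_⟩
      rw [image_eq V hVs]
      exact hold U₀ hU₀ (nonempty_of_card U₀ hcU) V hVs (hcV.trans hcU.symm) hR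
    · have hfresh : ∀ W ⊆ s, W.card = U₀.card → ¬ R U₀ W := fun W hW hcW hR =>
        hex ⟨W, hW, hcW.trans hcU, hR⟩
      refine .inr fun V ⟨hV, hcV⟩ => ⟨fun hR => hex ⟨V, hV, hcV, hR⟩, ?_⟩
      rw [image_eq V hV]
      exact hnew U₀ hU₀ (mem_of_fresh U₀ hU₀ (nonempty_of_card U₀ hcU) hfresh) hfresh V hV
  · rintro U₀ V₀ ⟨hU₀, hcU⟩ ⟨hV₀, hcV⟩ hfU hfV
    have hfU' : ∀ W ⊆ s, W.card = U₀.card → ¬ R U₀ W := fun W hW hcW =>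
      hfU W ⟨hW, hcW.trans hcU⟩
    have hfV' : ∀ W ⊆ s, W.card = V₀.card → ¬ R V₀ W := fun W hW hcW =>
      hfV W ⟨hW, hcW.trans hcV⟩
    exact hnew_iff U₀ hU₀ V₀ hV₀ (mem_of_fresh U₀ hU₀ (nonempty_of_card U₀ hcU) hfU')
      (mem_of_fresh V₀ hV₀ (nonempty_of_card V₀ hcV) hfV') (hcU.trans hcV.symm) hfU' hfV'

theorem IsTagEmbedding.update (hsymm : ∀ ⦃U V⦄, R U V → R V U)
    (htrans : ∀ ⦃U V W⦄, R U V → R V W → R U W)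
    (hrefl : ∀ U : Finset α, U.Nonempty → R U U)
    {s : Finset α} {G : α → ℕ} (hG : IsTagEmbedding R s G) {a : α} (ha : a ∉ s) {b : ℕ}
    (hb : ∀ x ∈ s, G x < b) (lab : Finset α → ℕ)
    (hold : ∀ W ⊆ s, ∀ V ⊆ s, V.card = W.card + 1 → R (insert a W) V →
      classTag (insert b (W.image G)) = classTag (V.image G))
    (hnew : ∀ W ⊆ s, (∀ V ⊆ s, V.card = W.card + 1 → ¬ R (insert a W) V) →
      classTag (insert b (W.image G)) = .inl (b, lab W))
    (hlab : ∀ W ⊆ s, ∀ W' ⊆ s, lab W = lab W' ↔ R (insert a W) (insert a W')) :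
    IsTagEmbedding R (insert a s) (Function.update G a b) := by
  have update_eq : ∀ x ∈ s, Function.update G a b x = G x := fun _ hx =>
    Function.update_of_ne (ne_of_mem_of_not_mem hx ha) _ _
  have tag_fresh : ∀ U ⊆ insert a s, a ∈ U → (∀ W ⊆ s, W.card = U.card → ¬ R U W) →
      classTag (U.image (Function.update G a b)) = .inl (b, lab (U.erase a)) := by
    intro U hU haU hfresh
    rw [Finset.image_update_of_mem haU]
    refine hnew _ (Finset.subset_insert_iff.1 hU) fun V hV hcard => ?_
    rw [Finset.insert_erase haU]
    exact hfresh V hV (by rw [hcard, Finset.card_erase_add_one haU])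
  refine isTagEmbedding_insert hsymm htrans hrefl hG update_eq ?_
    (fun U hU hUne V hV hcard hR => ?_)
    (fun U hU haU hfresh V hV => ?_) fun U hU V hV haU haV _ hfU hfV => ?_
  · rw [Finset.coe_insert]
    exact hG.1.update_insert (by simpa using ha) fun ⟨x, hx, hGx⟩ => (hb x hx).ne hGx
  · by_cases haU : a ∈ U
    · rw [Finset.image_update_of_mem haU]
      refine hold _ (Finset.subset_insert_iff.1 hU) V hV ?_ (by rwa [Finset.insert_erase haU])
      rw [hcard, Finset.card_erase_add_one haU]
    · have hUs := (Finset.subset_insert_iff_of_notMem haU).1 hU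
      rw [Finset.image_congr fun x hx => update_eq x (hUs hx)]
      exact (hG.2 U hUs V hV hUne hcard.symm).1 hR
  · rw [tag_fresh U hU haU hfresh]
    refine (classTag_ne_inl_of_lt _ fun y hy => ?_).symm
    obtain ⟨x, hx, rfl⟩ := Finset.mem_image.1 hy
    exact hb x (hV hx)
  · simp only [tag_fresh U hU haU hfU, tag_fresh V hV haV hfV, Sum.inl.injEq, Prod.mk.injEq,
      true_and, hlab _ (Finset.subset_insert_iff.1 hU) _ (Finset.subset_insert_iff.1 hV),
      Finset.insert_erase haU, Finset.insert_erase haV]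

theorem IsTagEmbedding.exists_extend (hsymm : ∀ ⦃U V⦄, R U V → R V U)
    (htrans : ∀ ⦃U V W⦄, R U V → R V W → R U W)
    (hrefl : ∀ U : Finset α, U.Nonempty → R U U)
    {s : Finset α} {G : α → ℕ} (hG : IsTagEmbedding R s G) (a : α) :
    ∃ G' : α → ℕ, (∀ x ∈ s, G' x = G x) ∧ IsTagEmbedding R (insert a s) G' := by
  classical
  by_cases ha : a ∈ s
  · exact ⟨G, fun _ _ => rfl, by rwa [Finset.insert_eq_of_mem ha]⟩
  let pre (S : Finset ℕ) : Finset α := s.filter fun x => G x ∈ S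
  have pre_image : ∀ W ⊆ s, pre (W.image G) = W := fun _ hW => hG.1.filter_mem_image_eq hW
  let Old (W : Finset α) : Prop := ∃ V ⊆ s, V.card = W.card + 1 ∧ R (insert a W) V
  -- the label of a new class codes the class itself, so labels agree exactly on related sets
  let lab (W : Finset α) : ℕ :=
    Encodable.encode ((s.image G).powerset.filter fun S => R (insert a W) (insert a (pre S)))
  let instr (W : Finset α) : Finset ℕ ⊕ ℕ :=
    if h : Old W then .inl (h.choose.image G) else .inr (lab W)
  obtain ⟨b, hsup, hcode⟩ := exists_instruction_eq ((s.image G).sup (· + 1))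
    (s.powerset.image (Finset.image G)) fun S => instr (pre S)
  have hlt_image : ∀ W ⊆ s, ∀ y ∈ W.image G, y < b := fun W hW y hy =>
    (Finset.le_sup (f := (· + 1)) (Finset.image_subset_image hW hy)).trans hsup
  have hinstr : ∀ W ⊆ s, instruction b (W.image G) = instr W := fun W hW => by
    rw [hcode _ (Finset.mem_image_of_mem _ (Finset.mem_powerset.2 hW)), pre_image W hW]
  refine ⟨Function.update G a b,
    fun _ hx => Function.update_of_ne (ne_of_mem_of_not_mem hx ha) _ _,
    hG.update hsymm htrans hrefl ha
      (fun x hx => hlt_image s subset_rfl _ (Finset.mem_image_of_mem G hx)) lab ?_ ?_ ?_⟩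
  · intro W hW V hV hcV hR
    have hold : Old W := ⟨V, hV, hcV, hR⟩
    obtain ⟨hV₀, hcV₀, hR₀⟩ := hold.choose_spec
    rw [classTag_insert_of_inl (hlt_image W hW) (hlt_image _ hV₀)
      (by rw [hinstr W hW]; exact dif_pos hold)]
    exact (hG.2 _ hV₀ V hV (Finset.card_pos.1 (by omega)) (hcV₀.trans hcV.symm)).1
      (htrans (hsymm hR₀) hR)
  · intro W hW hnew
    refine classTag_insert_of_inr (hlt_image W hW) ?_
    rw [hinstr W hW]
    exact dif_neg fun ⟨V, hV, hcV, hR⟩ => hnew V hV hcV hR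
  · intro W hW W' hW'
    refine ⟨fun h => ?_, fun h => congrArg Encodable.encode (Finset.filter_congr fun S _ =>
      ⟨htrans (hsymm h), htrans h⟩)⟩
    have hmem : W'.image G ∈ (s.image G).powerset.filter
        fun S => R (insert a W') (insert a (pre S)) := by
      refine Finset.mem_filter.2 ⟨Finset.mem_powerset.2 (Finset.image_subset_image hW'), ?_⟩
      rw [pre_image W' hW']
      exact hrefl _ (Finset.insert_nonempty a W')
    rw [← Encodable.encode_injective h, Finset.mem_filter, pre_image W' hW'] at hmem
    exact hmem.2

end TagEmbedding

section SetRel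

variable {A : Type*} [L₀.Structure A]

def SetRel (A : Type*) [L₀.Structure A] (U V : Finset A) : Prop :=
  ∃ (n : ℕ) (hn : 0 < n) (x y : Fin n → A),
    Set.range x = U ∧ Set.range y = V ∧ ERel A n hn x y

theorem IsK0Struct.erel_iff_setRel (hA : IsK0Struct A) {n : ℕ} (hn : 0 < n) {x y : Fin n → A}
    (hx : Function.Injective x) (hy : Function.Injective y) {U V : Finset A}
    (hxU : Set.range x = U) (hyV : Set.range y = V) :
    ERel A n hn x y ↔ SetRel A U V := by
  refine ⟨fun h => ⟨n, hn, x, y, hxU, hyV, h⟩, ?_⟩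
  rintro ⟨m, hm, x', y', hx'U, hy'V, h⟩
  obtain ⟨hx', hy'⟩ := (hA m hm).1 x' y' h
  obtain rfl : m = n :=
    (Finset.card_eq_of_range_eq hx' hx'U).symm.trans (Finset.card_eq_of_range_eq hx hxU)
  obtain ⟨σ, rfl⟩ := hx.exists_perm_comp_eq hx' (hxU.trans hx'U.symm)
  obtain ⟨τ, rfl⟩ := hy.exists_perm_comp_eq hy' (hyV.trans hy'V.symm)
  exact (hA m hm).2.1 x' y' σ τ h

theorem IsK0Struct.setRel_symm (hA : IsK0Struct A) ⦃U V : Finset A⦄ (h : SetRel A U V) :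
    SetRel A V U := by
  obtain ⟨n, hn, x, y, hxU, hyV, h⟩ := h
  exact ⟨n, hn, y, x, hyV, hxU, (hA n hn).2.2.2.1 x y h⟩

theorem IsK0Struct.setRel_trans (hA : IsK0Struct A) ⦃U V W : Finset A⦄ (hUV : SetRel A U V)
    (hVW : SetRel A V W) : SetRel A U W := by
  obtain ⟨n, hn, x, y, hxU, hyV, hxy⟩ := hUV
  obtain ⟨hx, hy⟩ := (hA n hn).1 x y hxy
  obtain ⟨m, hm, y', z, hy'V, hzW, hyz⟩ := hVW
  obtain ⟨hy', hz⟩ := (hA m hm).1 y' z hyz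
  obtain rfl : m = n :=
    (Finset.card_eq_of_range_eq hy' hy'V).symm.trans (Finset.card_eq_of_range_eq hy hyV)
  have hyz : ERel A m hn y z :=
    (IsK0Struct.erel_iff_setRel hA hn hy hz hyV hzW).2 ⟨m, hm, y', z, hy'V, hzW, hyz⟩
  exact ⟨m, hn, x, z, hxU, hzW, (hA m hn).2.2.2.2 x y z hxy hyz⟩

theorem IsK0Struct.setRel_refl (hA : IsK0Struct A) {U : Finset A} (hU : U.Nonempty) :
    SetRel A U U := by
  obtain ⟨x, hx, hxU⟩ := U.exists_injective_range_eq rfl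
  exact ⟨_, hU.card_pos, x, x, hxU, hxU, (hA _ hU.card_pos).2.2.1 x hx⟩

end SetRel

theorem relMap_esymb_iff {M : Type*} [L₀.Structure M] {n : ℕ} (hn : 0 < n)
    (w : Fin (n + n) → M) : RelMap (Esymb n hn) w ↔
      ERel M n hn (fun i => w (Fin.castAdd n i)) (fun i => w (Fin.natAdd n i)) := by
  rw [ERel, Fin.append_castAdd_natAdd]

theorem _root_.FirstOrder.Language.Embedding.erel_comp_iff {M N : Type*} [L₀.Structure M]
    [L₀.Structure N] (e : M ↪[L₀] N) {n : ℕ} (hn : 0 < n) (x y : Fin n → M) :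
    ERel N n hn (e ∘ x) (e ∘ y) ↔ ERel M n hn x y := by
  rw [ERel, ERel, ← Fin.comp_append]
  exact e.map_rel _ _

theorem IsK0Struct.of_embedding {A B : Type*} [L₀.Structure A] [L₀.Structure B]
    (e : A ↪[L₀] B) (hB : IsK0Struct B) : IsK0Struct A := by
  intro n hn
  simp only [← e.erel_comp_iff hn]
  obtain ⟨hinj, hperm, hrefl, hsymm, htrans⟩ := hB n hn
  exact ⟨fun x y h => (hinj _ _ h).imp (·.of_comp) (·.of_comp),
    fun x y σ τ => hperm _ _ σ τ, fun x hx => hrefl _ (e.injective.comp hx),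
    fun x y => hsymm _ _, fun x y z => htrans _ _ _⟩

section Generic

def TagRel {n : ℕ} (x y : Fin n → ULift.{u} ℕ) : Prop :=
  Function.Injective x ∧ Function.Injective y ∧
    classTag (Finset.univ.image fun i => (x i).down) =
      classTag (Finset.univ.image fun i => (y i).down)

noncomputable instance genericStructure : L₀.Structure (ULift.{u} ℕ) where
  funMap f := Empty.elim f
  RelMap r w := TagRel (fun i => w (Fin.cast r.2.2.symm (Fin.castAdd r.1 i)))
    (fun i => w (Fin.cast r.2.2.symm (Fin.natAdd r.1 i)))

theorem erel_generic_iff {n : ℕ} (hn : 0 < n) (x y : Fin n → ULift.{u} ℕ) :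
    ERel (ULift.{u} ℕ) n hn x y ↔ TagRel x y := by
  simp only [ERel, RelMap, Esymb, Fin.cast_eq_self, Fin.append_left, Fin.append_right]

theorem isK0Struct_generic : IsK0Struct (ULift.{u} ℕ) := by
  intro n hn
  simp only [erel_generic_iff]
  refine ⟨fun x y h => ⟨h.1, h.2.1⟩, fun x y σ τ h => ?_, fun x hx => ⟨hx, hx, rfl⟩,
    fun x y h => ⟨h.2.1, h.1, h.2.2.symm⟩,
    fun x y z h₁ h₂ => ⟨h₁.1, h₂.2.1, h₁.2.2.trans h₂.2.2⟩⟩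
  refine ⟨h.1.comp σ.injective, h.2.1.comp τ.injective, ?_⟩
  have hx := Finset.image_univ_comp_perm (fun i => (x i).down) σ
  have hy := Finset.image_univ_comp_perm (fun i => (y i).down) τ
  simp only [Function.comp_def] at hx hy ⊢
  rw [hx, hy]
  exact h.2.2

theorem erel_up_comp_iff {A : Type*} [DecidableEq A] {s : Set A} {G : A → ℕ}
    (hG : Set.InjOn G s) {n : ℕ} (hn : 0 < n) {x y : Fin n → A} (hx : Function.Injective x)
    (hy : Function.Injective y) (hxs : ∀ i, x i ∈ s) (hys : ∀ i, y i ∈ s) :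
    ERel (ULift.{u} ℕ) n hn ((ULift.up ∘ G) ∘ x) ((ULift.up ∘ G) ∘ y) ↔
      classTag ((Finset.univ.image x).image G) = classTag ((Finset.univ.image y).image G) := by
  have hinj : ∀ z : Fin n → A, Function.Injective z → (∀ i, z i ∈ s) →
      Function.Injective ((ULift.up.{u} ∘ G) ∘ z) := fun z hz hzs i j h =>
    hz (hG (hzs i) (hzs j) (ULift.up_injective h))
  rw [erel_generic_iff, TagRel, Finset.image_image, Finset.image_image,
    and_iff_right (hinj x hx hxs), and_iff_right (hinj y hy hys)]
  rfl

end Generic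

section PartialEmbedding

variable {A B : Type*} [L₀.Structure A] [L₀.Structure B]

def IsPartialEmb (s : Set A) (g : A → B) : Prop :=
  Set.InjOn g s ∧ ∀ (n : ℕ) (hn : 0 < n) (x y : Fin n → A), (∀ i, x i ∈ s) →
    (∀ i, y i ∈ s) → (ERel B n hn (g ∘ x) (g ∘ y) ↔ ERel A n hn x y)

noncomputable def IsPartialEmb.toEmbedding {s : Set A} {g : A → B} (hg : IsPartialEmb s g)
    (S : L₀.Substructure A) (hS : (S : Set A) ⊆ s) : S ↪[L₀] B where
  toFun z := g z
  inj' _ _ h := Subtype.ext (hg.1 (hS (Subtype.prop _)) (hS (Subtype.prop _)) h)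
  map_fun' f := Empty.elim f
  map_rel' := by
    rintro _ ⟨n, hn, rfl⟩ w
    exact (relMap_esymb_iff hn _).trans ((hg.2 n hn _ _ (fun i => hS (w _).2)
      fun i => hS (w _).2).trans (relMap_esymb_iff hn (Subtype.val ∘ w)).symm)

theorem isPartialEmb_of_embedding {S : L₀.Substructure A} (f : S ↪[L₀] B) {g : A → B}
    (hg : ∀ z : S, g z = f z) : IsPartialEmb (S : Set A) g := by
  refine ⟨fun x hx y hy h => ?_, fun n hn x y hx hy => ?_⟩
  · rw [hg ⟨x, hx⟩, hg ⟨y, hy⟩] at h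
    exact congrArg Subtype.val (f.injective h)
  · have hgx : g ∘ x = f ∘ fun i => ⟨x i, hx i⟩ := funext fun i => hg ⟨x i, hx i⟩
    have hgy : g ∘ y = f ∘ fun i => ⟨y i, hy i⟩ := funext fun i => hg ⟨y i, hy i⟩
    rw [hgx, hgy, f.erel_comp_iff, ← S.subtype.erel_comp_iff]
    rfl

theorem isPartialEmb_up_iff [DecidableEq A] (hA : IsK0Struct A) {s : Finset A} {G : A → ℕ} :
    IsPartialEmb (s : Set A) (ULift.up.{u} ∘ G) ↔ IsTagEmbedding (SetRel A) s G := by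
  constructor
  · rintro ⟨hinj, hrel⟩
    have hG : Set.InjOn G s := hinj.of_comp
    refine ⟨hG, fun U hU V hV hUne hcard => ?_⟩
    obtain ⟨x, hx, hxU⟩ := U.exists_injective_range_eq rfl
    obtain ⟨y, hy, hyV⟩ := V.exists_injective_range_eq hcard.symm
    have hUx : U = Finset.univ.image x := Finset.coe_injective (by simp [hxU])
    have hVy : V = Finset.univ.image y := Finset.coe_injective (by simp [hyV])
    have hxs : ∀ i, x i ∈ s := fun i =>
      hU (hUx ▸ Finset.mem_image_of_mem x (Finset.mem_univ _))
    have hys : ∀ i, y i ∈ s := fun i =>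
      hV (hVy ▸ Finset.mem_image_of_mem y (Finset.mem_univ _))
    rw [← IsK0Struct.erel_iff_setRel hA hUne.card_pos hx hy hxU hyV, ← hrel _ _ x y hxs hys,
      erel_up_comp_iff hG _ hx hy hxs hys, ← hUx, ← hVy]
  · rintro ⟨hG, htag⟩
    refine ⟨ULift.up_injective.comp_injOn hG, fun n hn x y hxs hys => ?_⟩
    by_cases hinj : Function.Injective x ∧ Function.Injective y
    · obtain ⟨hx, hy⟩ := hinj
      have hsub : ∀ z : Fin n → A, (∀ i, z i ∈ s) → Finset.univ.image z ⊆ s :=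
        fun z hz w hw => by
          obtain ⟨i, -, rfl⟩ := Finset.mem_image.1 hw
          exact hz i
      rw [erel_up_comp_iff hG hn hx hy hxs hys, IsK0Struct.erel_iff_setRel hA hn hx hy
        (U := Finset.univ.image x) (V := Finset.univ.image y) (by simp) (by simp)]
      refine (htag _ (hsub x hxs) _ (hsub y hys)
        ⟨x ⟨0, hn⟩, Finset.mem_image_of_mem x (Finset.mem_univ _)⟩ ?_).symm
      rw [Finset.card_image_of_injective _ hx, Finset.card_image_of_injective _ hy]
    · refine iff_of_false (fun h => hinj ?_) fun h => hinj ((hA n hn).1 x y h)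
      obtain ⟨hx, hy, -⟩ := (erel_generic_iff hn _ _).1 h
      exact ⟨hx.of_comp, hy.of_comp⟩

end PartialEmbedding

section Fraisse

instance : L₀.IsRelational := fun _ => inferInstanceAs (IsEmpty Empty)

instance : IsEmpty (L₀.Relations 0) := ⟨fun ⟨n, hn, h⟩ => by omega⟩

theorem isExtensionPair_generic {A : Type*} [L₀.Structure A] (hA : IsK0Struct A) :
    L₀.IsExtensionPair A (ULift.{u} ℕ) := by
  classical
  rw [isExtensionPair_iff_exists_embedding_closure_singleton_sup]
  intro S hS f a
  have : Finite (S : Set A) := hS.finite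
  obtain ⟨s, hs⟩ := (Set.toFinite (S : Set A)).exists_finset_coe
  let G (z : A) : ℕ := if h : z ∈ S then (f ⟨z, h⟩).down else 0
  have hG : IsTagEmbedding (SetRel A) s G := by
    refine (isPartialEmb_up_iff hA).1 (hs ▸ isPartialEmb_of_embedding f fun z => ?_)
    simp [G]
  obtain ⟨G', hG'G, hG'⟩ := hG.exists_extend (IsK0Struct.setRel_symm hA)
    (IsK0Struct.setRel_trans hA) (fun _ => IsK0Struct.setRel_refl hA) a
  refine ⟨((isPartialEmb_up_iff hA).2 hG').toEmbedding _ ?_, ?_⟩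
  · rw [← Substructure.closure_eq S, ← Substructure.closure_union,
      Substructure.closure_eq_of_isRelational, Finset.coe_insert, hs, Set.singleton_union]
  · ext z
    show (f z).down = G' z
    rw [hG'G z (by rw [← Finset.mem_coe, hs]; exact z.2)]
    simp [G]

theorem age_generic : L₀.age (ULift.{u} ℕ) = K₀ := by
  ext N
  refine ⟨fun ⟨hfg, ⟨e⟩⟩ =>
      ⟨hfg.finite, IsK0Struct.of_embedding e isK0Struct_generic⟩,
    fun ⟨hfin, hN⟩ => ⟨Structure.fg_iff_finite.2 hfin, ?_⟩⟩
  obtain ⟨e, -⟩ :=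
    embedding_from_cg Structure.cg_of_countable default (isExtensionPair_generic hN)
  exact ⟨e⟩

theorem isUltrahomogeneous_generic : L₀.IsUltrahomogeneous (ULift.{u} ℕ) :=
  (isUltrahomogeneous_iff_IsExtensionPair Structure.cg_of_countable).2
    (isExtensionPair_generic isK0Struct_generic)

end Fraisse

end K0Fraisse

/-- `K₀` is a Fraïssé class, and it has a Fraïssé limit: a countably infinite
ultrahomogeneous `L₀`-structure whose age is exactly `K₀`. -/
theorem K0_isFraisse_and_limit_exists :
    IsFraisse K₀ ∧
      ∃ (M₀ : Type) (inst : L₀.Structure M₀), Countable M₀ ∧ Infinite M₀ ∧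
        @Language.IsUltrahomogeneous L₀ M₀ inst ∧ @Language.age L₀ M₀ inst = K₀ := by
  refine ⟨?_, ULift ℕ, K0Fraisse.genericStructure, inferInstance, inferInstance,
    K0Fraisse.isUltrahomogeneous_generic, K0Fraisse.age_generic⟩
  rw [← K0Fraisse.age_generic]
  exact K0Fraisse.isUltrahomogeneous_generic.age_isFraisse
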